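/- (1-D Maximal Selection Principle.) For every f ∈ H²(𝔻) there exists a₁ ∈ 𝔻 such that (1−|a₁|²)|f(a₁)|² = sup { (1−|a|²)|f(a)|² : a ∈ 𝔻 }; equivalently, |⟨f, e_a⟩|² attains its supremum over a ∈ 𝔻. -/

import Mathlib

/-!
Write `F z = ∑ cₙ zⁿ` on the disc. Parseval's identity on the circles `|z| = r` gives
`∑ |cₙ|² r²ⁿ ≤ ‖F‖²`, so letting `r → 1`, `∑ |cₙ|² < ∞`. Splitting the series after `N` terms
and applying Cauchy–Schwarz to the tail, whose weights satisfy `∑ |z|²ⁿ = 1 / (1 - |z|²)`, gives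
`(1 - |z|²) |F z|² ≤ 2 (1 - |z|²) (∑_{n<N} |cₙ|)² + 2 ∑_{n≥N} |cₙ|²`, so `(1 - |z|²) |F z|²` tends
to `0` as `|z| → 1`. Unless `F = 0`, it is positive somewhere, so its supremum is attained on a
compact subdisc.
-/

open MeasureTheory Real Complex Filter

noncomputable section

/-- The point `e^{it}` on the unit circle. -/
def bp (t : ℝ) : ℂ := Complex.exp (Complex.I * t)

/-- The normalized Szegő kernel. -/
def szego (a z : ℂ) : ℂ := (Real.sqrt (1 - ‖a‖ ^ 2) : ℂ) / (1 - (starRingEnd ℂ) a * z)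

/-- Membership in the Hardy space `H²(𝔻)`: `F` is holomorphic on the unit disc and its
circle means `(1/2π)∫₀^{2π} ‖F(r e^{it})‖² dt`, `0 ≤ r < 1`, are uniformly bounded. -/
def IsH2D (F : ℂ → ℂ) : Prop :=
  DifferentiableOn ℂ F (Metric.ball 0 1) ∧
    BddAbove (Set.range fun r : Set.Ico (0 : ℝ) 1 =>
      (1 / (2 * π)) * ∫ t in (0:ℝ)..(2 * π), ‖F (((r : ℝ) : ℂ) * bp t)‖ ^ 2)

/-- The squared `H²(𝔻)` norm, `sup_{0≤r<1} (1/2π)∫₀^{2π} ‖F(r e^{it})‖² dt`, which equals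
the squared `L²(𝕋)` norm of the boundary values of `F`. -/
def H2NormSq (F : ℂ → ℂ) : ℝ :=
  ⨆ r : Set.Ico (0 : ℝ) 1,
    (1 / (2 * π)) * ∫ t in (0:ℝ)..(2 * π), ‖F (((r : ℝ) : ℂ) * bp t)‖ ^ 2

open scoped Topology

theorem tsum_mul_sq_le_sq_mul_sq {ι : Type*} {f g : ι → ℝ} (hf : Summable fun i => f i ^ 2)
    (hg : Summable fun i => g i ^ 2) :
    (∑' i, f i * g i) ^ 2 ≤ (∑' i, f i ^ 2) * ∑' i, g i ^ 2 := by
  have hfg : Summable fun i => f i * g i :=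
    .of_norm_bounded ((hf.add hg).div_const 2) fun i => by
      rw [Real.norm_eq_abs, abs_mul]
      nlinarith [sq_nonneg (|f i| - |g i|), sq_abs (f i), sq_abs (g i)]
  exact le_of_tendsto_of_tendsto' (hfg.hasSum.pow 2) (Tendsto.mul hf.hasSum hg.hasSum)
    fun s => Finset.sum_mul_sq_le_sq_mul_sq s f g

section PowerSeries

variable {E : Type*} [NormedAddCommGroup E] [NormedSpace ℂ E] {c : ℕ → E} {z : ℂ}

theorem hasSum_norm_pow_sq (hz : ‖z‖ < 1) : HasSum (fun n => (‖z‖ ^ n) ^ 2) (1 - ‖z‖ ^ 2)⁻¹ := by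
  simp_rw [← pow_mul, mul_comm _ 2, pow_mul]
  exact hasSum_geometric_of_lt_one (by positivity) (by nlinarith [norm_nonneg z])

theorem summable_norm_pow_smul (hc : Summable fun n => ‖c n‖ ^ 2) (hz : ‖z‖ < 1) :
    Summable fun n => ‖z ^ n • c n‖ := by
  simp_rw [norm_smul, norm_pow]
  exact .of_nonneg_of_le (fun n => by positivity)
    (fun n => by nlinarith [sq_nonneg (‖z‖ ^ n - ‖c n‖)])
    (((hasSum_norm_pow_sq hz).summable.add hc).div_const 2)

theorem norm_tsum_pow_smul_sq_le (hc : Summable fun n => ‖c n‖ ^ 2) (hz : ‖z‖ < 1) :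
    ‖∑' n, z ^ n • c n‖ ^ 2 ≤ (∑' n, ‖c n‖ ^ 2) / (1 - ‖z‖ ^ 2) := by
  have hgeom := hasSum_norm_pow_sq hz
  calc ‖∑' n, z ^ n • c n‖ ^ 2 ≤ (∑' n, ‖c n‖ * ‖z‖ ^ n) ^ 2 := by
        have h : ‖∑' n, z ^ n • c n‖ ≤ ∑' n, ‖z ^ n • c n‖ :=
          norm_tsum_le_tsum_norm (summable_norm_pow_smul hc hz)
        simp_rw [norm_smul, norm_pow, mul_comm (‖z‖ ^ _)] at h
        gcongr
    _ ≤ (∑' n, ‖c n‖ ^ 2) * ∑' n, (‖z‖ ^ n) ^ 2 :=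
        tsum_mul_sq_le_sq_mul_sq (f := fun n => ‖c n‖) (g := fun n => ‖z‖ ^ n) hc hgeom.summable
    _ = (∑' n, ‖c n‖ ^ 2) / (1 - ‖z‖ ^ 2) := by rw [hgeom.tsum_eq, div_eq_mul_inv]

theorem norm_tsum_pow_smul_le_add [CompleteSpace E] (hc : Summable fun n => ‖c n‖ ^ 2)
    (hz : ‖z‖ < 1) (N : ℕ) :
    ‖∑' n, z ^ n • c n‖ ≤ ∑ n ∈ Finset.range N, ‖c n‖ + ‖∑' n, z ^ n • c (n + N)‖ := by
  have hpow : ∀ n, ‖z ^ n‖ ≤ 1 := fun n => by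
    rw [norm_pow]; exact pow_le_one₀ (norm_nonneg z) hz.le
  rw [← (summable_norm_pow_smul hc hz).of_norm.sum_add_tsum_nat_add N]
  simp_rw [pow_add, mul_comm (z ^ _) (z ^ N), mul_smul]
  rw [tsum_const_smul'']
  refine (norm_add_le _ _).trans (add_le_add ((norm_sum_le _ _).trans ?_) ?_)
  · exact Finset.sum_le_sum fun n _ => by
      rw [norm_smul]; exact mul_le_of_le_one_left (norm_nonneg _) (hpow n)
  · rw [norm_smul]; exact mul_le_of_le_one_left (norm_nonneg _) (hpow N)

theorem exists_one_sub_sq_mul_norm_tsum_pow_smul_sq_lt [CompleteSpace E]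
    (hc : Summable fun n => ‖c n‖ ^ 2) {ε : ℝ} (hε : 0 < ε) :
    ∃ r < 1, ∀ z : ℂ, r < ‖z‖ → ‖z‖ < 1 → (1 - ‖z‖ ^ 2) * ‖∑' n, z ^ n • c n‖ ^ 2 < ε := by
  obtain ⟨N, hN⟩ := ((tendsto_sum_nat_add fun n => ‖c n‖ ^ 2).eventually
    (gt_mem_nhds (show (0 : ℝ) < ε / 4 by positivity))).exists
  set H := ∑ n ∈ Finset.range N, ‖c n‖
  obtain ⟨δ, hδ, hδH⟩ : ∃ δ > 0, δ * H ^ 2 < ε / 4 := by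
    refine ⟨ε / (4 * (H ^ 2 + 1)), by positivity, ?_⟩
    rw [div_mul_eq_mul_div, div_lt_div_iff₀ (by positivity) (by norm_num)]
    nlinarith
  refine ⟨1 - δ / 2, by linarith, fun z hrz hz => ?_⟩
  have hq : 1 - ‖z‖ ^ 2 < δ := by nlinarith [norm_nonneg z]
  have hq0 : 0 < 1 - ‖z‖ ^ 2 := by nlinarith [norm_nonneg z]
  set tail := ∑' n, z ^ n • c (n + N)
  have htail : (1 - ‖z‖ ^ 2) * ‖tail‖ ^ 2 ≤ ∑' n, ‖c (n + N)‖ ^ 2 := by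
    have h := norm_tsum_pow_smul_sq_le (c := fun n => c (n + N)) ((summable_nat_add_iff N).2 hc) hz
    rwa [le_div_iff₀ hq0, mul_comm] at h
  have hhead : (1 - ‖z‖ ^ 2) * H ^ 2 ≤ δ * H ^ 2 := by gcongr
  calc (1 - ‖z‖ ^ 2) * ‖∑' n, z ^ n • c n‖ ^ 2 ≤ (1 - ‖z‖ ^ 2) * (H + ‖tail‖) ^ 2 := by
        gcongr
        exact norm_tsum_pow_smul_le_add hc hz N
    _ ≤ 2 * ((1 - ‖z‖ ^ 2) * H ^ 2) + 2 * ((1 - ‖z‖ ^ 2) * ‖tail‖ ^ 2) := by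
        nlinarith [sq_nonneg (H - ‖tail‖)]
    _ < ε := by linarith

end PowerSeries

theorem exists_isMaxOn_ball_of_lt {α β : Type*} [PseudoMetricSpace α] [ProperSpace α]
    [LinearOrder β] [TopologicalSpace β] [ClosedIciTopology β] {φ : α → β} {c x₀ : α} {ρ r : ℝ}
    (hφ : ContinuousOn φ (Metric.ball c ρ)) (hx₀ : x₀ ∈ Metric.ball c ρ) (hr : r < ρ)
    (hlt : ∀ z ∈ Metric.ball c ρ, r < dist z c → φ z < φ x₀) :
    ∃ a ∈ Metric.ball c ρ, IsMaxOn φ (Metric.ball c ρ) a := by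
  set K := Metric.closedBall c (max r (dist x₀ c))
  have hK : K ⊆ Metric.ball c ρ := Metric.closedBall_subset_ball (max_lt hr hx₀)
  have hx₀K : x₀ ∈ K := Metric.mem_closedBall.2 (le_max_right _ _)
  obtain ⟨a, haK, ha⟩ := (isCompact_closedBall c _).exists_isMaxOn ⟨x₀, hx₀K⟩ (hφ.mono hK)
  refine ⟨a, hK haK, fun z hz => ?_⟩
  by_cases hzK : z ∈ K
  · exact ha hzK
  · have hrz : r < dist z c := (le_max_left _ _).trans_lt (not_le.1 hzK)
    exact ((hlt z hz hrz).trans_le (ha hx₀K)).le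

section CauchyPowerSeries

variable {E : Type*} [NormedAddCommGroup E] [NormedSpace ℂ E] [CompleteSpace E] {f : ℂ → E}
  {c : ℂ} {R r s : ℝ}

theorem DifferentiableOn.hasFPowerSeriesOnBall_cauchyPowerSeries
    (hf : DifferentiableOn ℂ f (Metric.ball c R)) (hr : 0 < r) (hrR : r < R) :
    HasFPowerSeriesOnBall f (cauchyPowerSeries f c r) c (ENNReal.ofReal r) := by
  lift r to NNReal using hr.le
  rw [ENNReal.ofReal_coe_nnreal]
  exact (hf.mono (Metric.closedBall_subset_ball hrR)).hasFPowerSeriesOnBall hr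

theorem DifferentiableOn.cauchyPowerSeries_eq (hf : DifferentiableOn ℂ f (Metric.ball c R))
    (hr : 0 < r) (hrR : r < R) (hs : 0 < s) (hsR : s < R) :
    cauchyPowerSeries f c r = cauchyPowerSeries f c s :=
  (hf.hasFPowerSeriesOnBall_cauchyPowerSeries hr hrR).hasFPowerSeriesAt.eq_formalMultilinearSeries
    (hf.hasFPowerSeriesOnBall_cauchyPowerSeries hs hsR).hasFPowerSeriesAt

theorem DifferentiableOn.hasSum_pow_smul_coeff (hf : DifferentiableOn ℂ f (Metric.ball c R))
    (hr : 0 < r) (hrR : r < R) {z : ℂ} (hz : z ∈ Metric.ball c R) :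
    HasSum (fun n => (z - c) ^ n • (cauchyPowerSeries f c r).coeff n) (f z) := by
  obtain ⟨s, hzs, hsR⟩ := exists_between (Metric.mem_ball.1 hz)
  have hs : 0 < s := dist_nonneg.trans_lt hzs
  have h := (hf.hasFPowerSeriesOnBall_cauchyPowerSeries hs hsR).hasSum (y := z - c)
    (by rwa [Metric.mem_eball, edist_zero_right, ← ofReal_norm,
      ENNReal.ofReal_lt_ofReal_iff hs, ← dist_eq_norm])
  rw [hf.cauchyPowerSeries_eq hr hrR hs hsR]
  simpa [FormalMultilinearSeries.apply_eq_pow_smul_coeff] using h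

end CauchyPowerSeries

theorem fourierCoeffOn_comp_circleMap {E : Type*} [NormedAddCommGroup E] [NormedSpace ℂ E]
    (f : ℂ → E) (c : ℂ) {R : ℝ} (hR : R ≠ 0) (n : ℕ) :
    fourierCoeffOn two_pi_pos (fun θ => f (circleMap c R θ)) n =
      (R : ℂ) ^ n • (cauchyPowerSeries f c R).coeff n := by
  -- the coefficient is the circle average of `(z - c)⁻ⁿ f z`, and `(z - c)⁻ⁿ = R⁻ⁿ e^{-inθ}` there
  change _ = _ • cauchyPowerSeries f c R n (fun _ => 1)
  have hcomm : (fun z => (1 / (z - c)) ^ n • (z - c)⁻¹ • f z) =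
      fun z => (z - c)⁻¹ • (1 / (z - c)) ^ n • f z := funext fun z => smul_comm _ _ _
  rw [cauchyPowerSeries_apply, hcomm, ← circleAverage_eq_circleIntegral hR, circleAverage_def,
    fourierCoeffOn_eq_integral, sub_zero, ← intervalIntegral.integral_smul,
    ← intervalIntegral.integral_smul, ← intervalIntegral.integral_smul]
  congr 1 with θ
  rw [fourier_coe_apply, circleMap_sub_center, circleMap_zero]
  simp only [← Complex.coe_smul, smul_smul]
  congr 1
  have hR' : (R : ℂ) ≠ 0 := ofReal_ne_zero.2 hR
  have hexp : cexp (2 * π * I * ↑(-(n : ℤ)) * θ / ↑(2 * π)) * cexp (I * θ) ^ n = 1 := by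
    rw [← Complex.exp_nat_mul, ← Complex.exp_add, Complex.exp_eq_one_iff]
    exact ⟨0, by push_cast; field_simp; ring⟩
  rw [div_pow, one_pow, mul_pow]
  field_simp
  linear_combination hexp

theorem sum_range_norm_coeff_sq_mul_le_circleAverage {f : ℂ → ℂ} {c : ℂ} {R : ℝ} (hR : 0 < R)
    (hf : ContinuousOn f (Metric.sphere c R)) (N : ℕ) :
    ∑ n ∈ Finset.range N, ‖(cauchyPowerSeries f c R).coeff n‖ ^ 2 * R ^ (2 * n) ≤
      circleAverage (fun z => ‖f z‖ ^ 2) c R := by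
  obtain ⟨C, hC⟩ := (isCompact_sphere c R).exists_bound_of_continuousOn hf
  have hL2 : MemLp (fun θ => f (circleMap c R θ)) 2 (volume.restrict (Set.Ioc 0 (2 * π))) :=
    .of_bound (hf.comp_continuous (continuous_circleMap c R)
      (circleMap_mem_sphere c hR.le)).aestronglyMeasurable C
      (ae_of_all _ fun θ => hC _ (circleMap_mem_sphere c hR.le θ))
  have hParseval :
      HasSum (fun i => ‖fourierCoeffOn two_pi_pos (fun θ => f (circleMap c R θ)) i‖ ^ 2)
      (circleAverage (fun z => ‖f z‖ ^ 2) c R) := by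
    simpa [circleAverage_def] using hasSum_sq_fourierCoeffOn two_pi_pos hL2
  have hpartial := sum_le_hasSum ((Finset.range N).map Nat.castEmbedding)
    (fun _ _ => sq_nonneg _) hParseval
  refine le_of_eq_of_le (Finset.sum_congr rfl fun n _ => ?_) (by simpa using hpartial)
  rw [fourierCoeffOn_comp_circleMap f c hR.ne', norm_smul, norm_pow, norm_real,
    norm_of_nonneg hR.le]
  ring

theorem IsH2D.summable_norm_coeff_sq {F : ℂ → ℂ} (hF : IsH2D F) {ρ : ℝ} (hρ : 0 < ρ)
    (hρ1 : ρ < 1) : Summable fun n => ‖(cauchyPowerSeries F 0 ρ).coeff n‖ ^ 2 := by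
  obtain ⟨hd, hbdd⟩ := hF
  have hmean : ∀ N, ∀ r ∈ Set.Ioo (0 : ℝ) 1,
      ∑ n ∈ Finset.range N, ‖(cauchyPowerSeries F 0 ρ).coeff n‖ ^ 2 * r ^ (2 * n) ≤ H2NormSq F := by
    rintro N r ⟨hr, hr1⟩
    rw [hd.cauchyPowerSeries_eq hρ hρ1 hr hr1]
    refine (sum_range_norm_coeff_sq_mul_le_circleAverage hr (hd.continuousOn.mono
      (Metric.sphere_subset_closedBall.trans (Metric.closedBall_subset_ball hr1))) N).trans ?_
    refine le_of_eq_of_le ?_ (le_ciSup hbdd ⟨r, hr.le, hr1⟩)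
    simp [circleAverage_def, circleMap, bp, mul_comm]
  refine summable_of_sum_range_le (c := H2NormSq F) (fun n => sq_nonneg _) fun N => ?_
  have hlim : Tendsto (fun r : ℝ => ∑ n ∈ Finset.range N,
      ‖(cauchyPowerSeries F 0 ρ).coeff n‖ ^ 2 * r ^ (2 * n)) (𝓝[<] 1)
      (𝓝 (∑ n ∈ Finset.range N, ‖(cauchyPowerSeries F 0 ρ).coeff n‖ ^ 2)) := by
    have hcont : Continuous fun r : ℝ => ∑ n ∈ Finset.range N,
        ‖(cauchyPowerSeries F 0 ρ).coeff n‖ ^ 2 * r ^ (2 * n) := by fun_prop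
    simpa using (hcont.tendsto 1).mono_left nhdsWithin_le_nhds
  exact le_of_tendsto hlim (eventually_of_mem (Ioo_mem_nhdsLT zero_lt_one) (hmean N))

/-- 1-D Maximal Selection Principle: `(1-|a|²)|f(a)|² = |⟨f, e_a⟩|²`
attains its supremum over `a ∈ 𝔻`. -/
theorem oneD_maximal_selection (F : ℂ → ℂ) (hF : IsH2D F) :
    ∃ a₁ : ℂ, ‖a₁‖ < 1 ∧ ∀ a : ℂ, ‖a‖ < 1 →
      (1 - ‖a‖ ^ 2) * ‖F a‖ ^ 2 ≤ (1 - ‖a₁‖ ^ 2) * ‖F a₁‖ ^ 2 := by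
  set φ : ℂ → ℝ := fun a => (1 - ‖a‖ ^ 2) * ‖F a‖ ^ 2
  by_cases hzero : ∀ a ∈ Metric.ball (0 : ℂ) 1, F a = 0
  · exact ⟨0, by simp, fun a ha => by simp [hzero a (by simpa), hzero 0 (by simp)]⟩
  push Not at hzero
  obtain ⟨a₀, ha₀, hFa₀⟩ := hzero
  have hφa₀ : 0 < φ a₀ := by
    have hFa₀' : 0 < ‖F a₀‖ := norm_pos_iff.2 hFa₀
    have ha₀' : 0 < 1 - ‖a₀‖ ^ 2 := by nlinarith [norm_nonneg a₀, mem_ball_zero_iff.1 ha₀]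
    positivity
  -- by `DifferentiableOn.cauchyPowerSeries_eq`, any radius in `(0, 1)` gives the same series
  set p := cauchyPowerSeries F 0 2⁻¹
  have hrep : ∀ z ∈ Metric.ball (0 : ℂ) 1, F z = ∑' n, z ^ n • p.coeff n := fun z hz => by
    simpa using (hF.1.hasSum_pow_smul_coeff (by norm_num) (by norm_num) hz).tsum_eq.symm
  obtain ⟨r, hr1, hr⟩ := exists_one_sub_sq_mul_norm_tsum_pow_smul_sq_lt
    (hF.summable_norm_coeff_sq (ρ := 2⁻¹) (by norm_num) (by norm_num)) hφa₀
  have hcont : ContinuousOn φ (Metric.ball 0 1) := by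
    have := hF.1.continuousOn
    fun_prop
  obtain ⟨a₁, ha₁, hmax⟩ := exists_isMaxOn_ball_of_lt hcont ha₀ hr1 fun z hz hrz => by
    simpa [φ, hrep z hz] using hr z (by simpa using hrz) (by simpa using hz)
  exact ⟨a₁, by simpa using ha₁, fun a ha => hmax (by simpa using ha)⟩
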